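/- The conditioned walk \widehat{S} is transient: started from any x \neq 0, it visits any fixed site only finitely many times almost surely. -/

import Mathlib

open Filter
open scoped Classical

/-- The two-dimensional integer lattice. -/
abbrev Z2 := ℤ × ℤ

/-- Euclidean norm on `Z2`. -/
noncomputable def nrm (x : Z2) : ℝ := Real.sqrt ((x.1 : ℝ) ^ 2 + (x.2 : ℝ) ^ 2)

/-- Nearest-neighbour relation on `Z2`. -/
def nbr (x y : Z2) : Prop := (x.1 - y.1).natAbs + (x.2 - y.2).natAbs = 1

/-- `srwP n x = P_x[S_n = 0]`, the n-step probability for the simple random walk on `Z2`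
to be at the origin, defined by first-step decomposition. -/
noncomputable def srwP : ℕ → Z2 → ℝ
  | 0, x => if x = 0 then 1 else 0
  | n + 1, x =>
      (srwP n (x + (1, 0)) + srwP n (x - (1, 0)) + srwP n (x + (0, 1)) + srwP n (x - (0, 1))) / 4

/-- `a` is the potential kernel of the 2D simple random walk:
`a x = ∑_{k=0}^∞ (P_0[S_k = 0] - P_x[S_k = 0])` (convergence of the series). -/
def IsPotentialKernel (a : Z2 → ℝ) : Prop :=
  ∀ x : Z2,
    Tendsto (fun N => ∑ k ∈ Finset.range N, (srwP k 0 - srwP k x)) atTop (nhds (a x))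

/-- Transition matrix of the conditioned walk `Ŝ` (Doob h-transform by `a`):
`P̂(x,y) = a(y) / (4 a(x))` when `x ∼ y`, `x ≠ 0`, `y ≠ 0`, and `0` otherwise. -/
noncomputable def Phat (a : Z2 → ℝ) (x y : Z2) : ℝ :=
  if nbr x y ∧ x ≠ 0 ∧ y ≠ 0 then a y / (4 * a x) else 0

/-- n-step transition probabilities of the conditioned walk. -/
noncomputable def phat (a : Z2 → ℝ) : ℕ → Z2 → Z2 → ℝ
  | 0, x, y => if x = y then 1 else 0
  | n + 1, x, y => ∑' z, Phat a x z * phat a n z y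

/-- Green's function of the conditioned walk: expected number of visits to `y` from `x`. -/
noncomputable def Ghat (a : Z2 → ℝ) (x y : Z2) : ℝ := ∑' n, phat a n x y

/-- `hitLE a A n x = P_x[τ̂_A ≤ n]` for the conditioned walk (entrance time, `τ̂_A = min{n ≥ 0 : Ŝ_n ∈ A}`). -/
noncomputable def hitLE (a : Z2 → ℝ) (A : Set Z2) : ℕ → Z2 → ℝ
  | 0, x => if x ∈ A then 1 else 0
  | n + 1, x => if x ∈ A then 1 else ∑' z, Phat a x z * hitLE a A n z

/-- `hitProb a A x = P_x[τ̂_A < ∞]` for the conditioned walk. -/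
noncomputable def hitProb (a : Z2 → ℝ) (A : Set Z2) (x : Z2) : ℝ := ⨆ n, hitLE a A n x

/-- `retLE a A n x = P_x[τ̂⁺_A ≤ n]`, where `τ̂⁺_A = min{n ≥ 1 : Ŝ_n ∈ A}`. -/
noncomputable def retLE (a : Z2 → ℝ) (A : Set Z2) : ℕ → Z2 → ℝ
  | 0, _ => 0
  | n + 1, x => ∑' z, Phat a x z * hitLE a A n z

/-- `retProb a A x = P_x[τ̂⁺_A < ∞]` for the conditioned walk. -/
noncomputable def retProb (a : Z2 → ℝ) (A : Set Z2) (x : Z2) : ℝ := ⨆ n, retLE a A n x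

/-- `beforeLE a A B n x = P_x[τ̂_A ≤ n and τ̂_A < τ̂_B]`. -/
noncomputable def beforeLE (a : Z2 → ℝ) (A B : Set Z2) : ℕ → Z2 → ℝ
  | 0, x => if x ∈ A then 1 else 0
  | n + 1, x =>
      if x ∈ A then 1 else if x ∈ B then 0 else ∑' z, Phat a x z * beforeLE a A B n z

/-- `beforeProb a A B x = P_x[τ̂_A < τ̂_B]` for the conditioned walk. -/
noncomputable def beforeProb (a : Z2 → ℝ) (A B : Set Z2) (x : Z2) : ℝ := ⨆ n, beforeLE a A B n x

/-- `entLE a A y n x = P_x[τ̂_A ≤ n, Ŝ_{τ̂_A} = y]`. -/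
noncomputable def entLE (a : Z2 → ℝ) (A : Set Z2) (y : Z2) : ℕ → Z2 → ℝ
  | 0, x => if x ∈ A ∧ x = y then 1 else 0
  | n + 1, x =>
      if x ∈ A then (if x = y then 1 else 0) else ∑' z, Phat a x z * entLE a A y n z

/-- `entProb a A y x = P_x[τ̂_A < ∞, Ŝ_{τ̂_A} = y]`. -/
noncomputable def entProb (a : Z2 → ℝ) (A : Set Z2) (y x : Z2) : ℝ := ⨆ n, entLE a A y n x

/-- `visitsGE a y n t x = P_x[#{0 ≤ j ≤ t : Ŝ_j = y} ≥ n]`. -/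
noncomputable def visitsGE (a : Z2 → ℝ) (y : Z2) : ℕ → ℕ → Z2 → ℝ
  | 0, _, _ => 1
  | n + 1, 0, x => if x = y ∧ n = 0 then 1 else 0
  | n + 1, t + 1, x =>
      if x = y then ∑' z, Phat a x z * visitsGE a y n t z
      else ∑' z, Phat a x z * visitsGE a y (n + 1) t z

/-- The symmetrized Green's function `ĝ(x,y) = Ĝ(x,y)/a(y)² = (a(x)+a(y)-a(x-y))/(a(x)a(y))`. -/
noncomputable def ghat (a : Z2 → ℝ) (x y : Z2) : ℝ := (a x + a y - a (x - y)) / (a x * a y)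

/-- The discrete disk `B(y, r)` in `Z2`. -/
def diskB (y : Z2) (r : ℝ) : Set Z2 := {z : Z2 | nrm (z - y) ≤ r}

/-- Inner boundary of a set of `Z2`. -/
def innerBd (A : Set Z2) : Set Z2 := {z : Z2 | z ∈ A ∧ ∃ w, nbr z w ∧ w ∉ A}

/-- Distance from a point to a set. -/
noncomputable def distSet (x : Z2) (A : Set Z2) : ℝ := sInf ((fun y => nrm (x - y)) '' A)

/-- Diameter of a set. -/
noncomputable def diamSet (A : Set Z2) : ℝ :=
  sSup ((fun p : Z2 × Z2 => nrm (p.1 - p.2)) '' (A ×ˢ A))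

/-- Escape probability from `y ∈ A` for the conditioned walk: `P_y[τ̂⁺_A = ∞]`. -/
noncomputable def hatEs (a : Z2 → ℝ) (A : Set Z2) (y : Z2) : ℝ :=
  if y ∈ A then 1 - retProb a A y else 0

/-- Capacity of a finite set for the conditioned walk. -/
noncomputable def hatCap (a : Z2 → ℝ) (A : Finset Z2) : ℝ :=
  ∑ y ∈ A, (a y) ^ 2 * hatEs a (↑A) y

/-- Harmonic measure of the conditioned walk on a finite set. -/
noncomputable def hatHm (a : Z2 → ℝ) (A : Finset Z2) (y : Z2) : ℝ :=
  (a y) ^ 2 * hatEs a (↑A) y / hatCap a A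

/-!
`a` vanishes at the origin, is discrete-harmonic off it, and is nonnegative (from
`P[S_{2j} = x] ≤ P[S_{2j} = 0]`); by the minimum principle on the connected graph `ℤ² \ {0}`
it is positive there, so `P̂` is a substochastic, irreducible kernel on `ℤ² \ {0}`. Since
`1 / a` is `P̂`-harmonic except at the neighbours `u` of the origin, `4 a(u) / a` dominates the
Green function `Ĝ(·, u)`; irreducibility transfers this to a finite bound on `Ĝ(x, y)`, the
expected number of visits to `y`. Markov's inequality then gives
`P_x[#visits to y ≥ n] ≤ Ĝ(x, y) / n → 0`.
-/

def unitVecs : Finset Z2 := {(1, 0), (-1, 0), (0, 1), (0, -1)}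

lemma card_unitVecs : unitVecs.card = 4 := by decide

lemma neg_mem_unitVecs {d : Z2} (hd : d ∈ unitVecs) : -d ∈ unitVecs := by
  simp only [unitVecs, Finset.mem_insert, Finset.mem_singleton] at hd
  rcases hd with rfl | rfl | rfl | rfl <;> decide

lemma ne_zero_of_mem_unitVecs {d : Z2} (hd : d ∈ unitVecs) : d ≠ 0 := by
  simp only [unitVecs, Finset.mem_insert, Finset.mem_singleton] at hd
  rcases hd with rfl | rfl | rfl | rfl <;> decide

lemma sum_unitVecs {M : Type*} [AddCommMonoid M] (f : Z2 → M) :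
    ∑ d ∈ unitVecs, f d = f (1, 0) + f (-1, 0) + f (0, 1) + f (0, -1) := by
  simp [unitVecs, add_assoc]

lemma nbr_iff_sub_mem_unitVecs {x z : Z2} : nbr x z ↔ z - x ∈ unitVecs := by
  obtain ⟨x₁, x₂⟩ := x
  obtain ⟨z₁, z₂⟩ := z
  simp only [nbr, unitVecs, Finset.mem_insert, Finset.mem_singleton, Prod.mk_sub_mk,
    Prod.mk.injEq]
  omega

lemma nbr_symm {x z : Z2} (h : nbr x z) : nbr z x := by
  unfold nbr at *
  omega

section Connectivity

def PuncturedAdj (x z : Z2) : Prop := nbr x z ∧ x ≠ 0 ∧ z ≠ 0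

lemma PuncturedAdj.symm {x z : Z2} (h : PuncturedAdj x z) : PuncturedAdj z x :=
  ⟨nbr_symm h.1, h.2.2, h.2.1⟩

open Relation

instance : Std.Symm PuncturedAdj := ⟨fun _ _ => PuncturedAdj.symm⟩

lemma reflTransGen_puncturedAdj_horizontal {c : ℤ} (hc : c ≠ 0) (m n : ℤ) :
    ReflTransGen PuncturedAdj (m, c) (n, c) := by
  have hadj : ∀ i : ℤ, PuncturedAdj (i, c) (i + 1, c) := fun i =>
    ⟨by simp [nbr], by simp [hc], by simp [hc]⟩
  exact ReflTransGen.lift (fun i : ℤ => (i, c)) (fun i j h => h) m n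
    (reflTransGen_of_succ (fun i j => PuncturedAdj (i, c) (j, c))
      (fun i _ => hadj i) (fun i _ => (hadj i).symm))

lemma reflTransGen_puncturedAdj_vertical {c : ℤ} (hc : c ≠ 0) (m n : ℤ) :
    ReflTransGen PuncturedAdj (c, m) (c, n) := by
  have hadj : ∀ i : ℤ, PuncturedAdj (c, i) (c, i + 1) := fun i =>
    ⟨by simp [nbr], by simp [hc], by simp [hc]⟩
  exact ReflTransGen.lift (fun i : ℤ => (c, i)) (fun i j h => h) m n
    (reflTransGen_of_succ (fun i j => PuncturedAdj (c, i) (c, j))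
      (fun i _ => hadj i) (fun i _ => (hadj i).symm))

lemma reflTransGen_puncturedAdj_one_zero {y : Z2} (hy : y ≠ 0) :
    ReflTransGen PuncturedAdj y (1, 0) := by
  obtain ⟨y₁, y₂⟩ := y
  by_cases h₁ : y₁ = 0
  · subst h₁
    have h₂ : y₂ ≠ 0 := by rintro rfl; exact hy rfl
    exact (reflTransGen_puncturedAdj_horizontal h₂ 0 1).trans
      (reflTransGen_puncturedAdj_vertical one_ne_zero y₂ 0)
  · exact ((reflTransGen_puncturedAdj_vertical h₁ y₂ 1).trans
      (reflTransGen_puncturedAdj_horizontal one_ne_zero y₁ 1)).trans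
      (reflTransGen_puncturedAdj_vertical one_ne_zero 1 0)

lemma reflTransGen_puncturedAdj {y z : Z2} (hy : y ≠ 0) (hz : z ≠ 0) :
    ReflTransGen PuncturedAdj y z :=
  (reflTransGen_puncturedAdj_one_zero hy).trans
    (Std.Symm.symm _ _ (reflTransGen_puncturedAdj_one_zero hz))

end Connectivity

section SimpleRandomWalk

lemma srwP_succ_eq_sum (n : ℕ) (x : Z2) :
    srwP (n + 1) x = (∑ d ∈ unitVecs, srwP n (x + d)) / 4 := by
  rw [srwP, sum_unitVecs]
  simp only [sub_eq_add_neg, Prod.neg_mk, neg_zero]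

lemma srwP_eq_zero_of_lt {n : ℕ} {x : Z2} (h : n < x.1.natAbs + x.2.natAbs) : srwP n x = 0 := by
  induction n generalizing x with
  | zero => rw [srwP, if_neg]; rintro rfl; simp at h
  | succ n ih =>
    rw [srwP, ih, ih, ih, ih]
    · norm_num
    all_goals simp only [Prod.fst_add, Prod.snd_add, Prod.fst_sub, Prod.snd_sub]; omega

lemma srwP_eq_zero_of_odd {n : ℕ} {x : Z2} (h : ((n : ℤ) + x.1 + x.2) % 2 = 1) :
    srwP n x = 0 := by
  induction n generalizing x with
  | zero => rw [srwP, if_neg]; rintro rfl; simp at h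
  | succ n ih =>
    rw [srwP, ih, ih, ih, ih]
    · norm_num
    all_goals
      simp only [Prod.fst_add, Prod.snd_add, Prod.fst_sub, Prod.snd_sub]
      push_cast at h ⊢
      omega

lemma srwP_neg (n : ℕ) (x : Z2) : srwP n (-x) = srwP n x := by
  induction n generalizing x with
  | zero => simp [srwP]
  | succ n ih =>
    rw [srwP, srwP, show -x + (1, 0) = -(x - (1, 0)) by abel,
      show -x - (1, 0) = -(x + (1, 0)) by abel, show -x + (0, 1) = -(x - (0, 1)) by abel,
      show -x - (0, 1) = -(x + (0, 1)) by abel, ih, ih, ih, ih]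
    ring

noncomputable def box (n : ℕ) : Finset Z2 :=
  Finset.Icc (-(n : ℤ)) n ×ˢ Finset.Icc (-(n : ℤ)) n

lemma srwP_eq_zero_of_notMem_box {n : ℕ} {z : Z2} (hz : z ∉ box n) : srwP n z = 0 := by
  apply srwP_eq_zero_of_lt
  simp only [box, Finset.mem_product, Finset.mem_Icc] at hz
  omega

lemma srwP_add_eq_sum (m n : ℕ) (x : Z2) :
    srwP (m + n) x = ∑ z ∈ box n, srwP m (x - z) * srwP n z := by
  induction m generalizing x with
  | zero =>
    simp only [zero_add, srwP, sub_eq_zero, ite_mul, one_mul, zero_mul, Finset.sum_ite_eq]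
    split_ifs with hx
    · rfl
    · exact srwP_eq_zero_of_notMem_box hx
  | succ m ih =>
    rw [show m + 1 + n = m + n + 1 by omega, srwP_succ_eq_sum]
    simp only [ih, srwP_succ_eq_sum, Finset.sum_div, Finset.sum_mul]
    rw [Finset.sum_comm]
    refine Finset.sum_congr rfl fun z _ => Finset.sum_congr rfl fun d _ => ?_
    rw [show x + d - z = x - z + d by abel]
    ring

lemma srwP_add_eq_tsum (m n : ℕ) (x : Z2) :
    srwP (m + n) x = ∑' z, srwP m (x - z) * srwP n z := by
  rw [srwP_add_eq_sum, tsum_eq_sum]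
  intro z hz
  rw [srwP_eq_zero_of_notMem_box hz, mul_zero]

-- Chapman–Kolmogorov and `2st ≤ s² + t²`.
lemma srwP_two_mul_le (j : ℕ) (x : Z2) : srwP (2 * j) x ≤ srwP (2 * j) 0 := by
  have hsq : Summable fun z => srwP j z ^ 2 :=
    summable_of_ne_finset_zero (s := box j) fun z hz => by
      rw [srwP_eq_zero_of_notMem_box hz]; ring
  have hsq' : Summable fun z => srwP j (x - z) ^ 2 :=
    hsq.comp_injective (Equiv.subLeft x).injective
  have hprod : Summable fun z => srwP j (x - z) * srwP j z :=
    summable_of_ne_finset_zero (s := box j) fun z hz => by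
      rw [srwP_eq_zero_of_notMem_box hz, mul_zero]
  have hshift : ∑' z, srwP j (x - z) ^ 2 = ∑' z, srwP j z ^ 2 :=
    (Equiv.subLeft x).tsum_eq fun z => srwP j z ^ 2
  calc srwP (2 * j) x = ∑' z, srwP j (x - z) * srwP j z := by rw [two_mul, srwP_add_eq_tsum]
    _ ≤ ∑' z, (srwP j (x - z) ^ 2 + srwP j z ^ 2) / 2 :=
        hprod.tsum_le_tsum (fun z => by nlinarith [sq_nonneg (srwP j (x - z) - srwP j z)])
          ((hsq'.add hsq).div_const 2)
    _ = ∑' z, srwP j z ^ 2 := by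
        rw [tsum_div_const, hsq'.tsum_add hsq, hshift]; ring
    _ = srwP (2 * j) 0 := by
        rw [two_mul, srwP_add_eq_tsum]
        exact tsum_congr fun z => by rw [zero_sub, srwP_neg, sq]

lemma srwP_two_mul_add_srwP_two_mul_add_one_le (j : ℕ) (x : Z2) :
    srwP (2 * j) x + srwP (2 * j + 1) x ≤ srwP (2 * j) 0 := by
  by_cases hx : (x.1 + x.2) % 2 = 0
  · rw [srwP_eq_zero_of_odd (n := 2 * j + 1) (by push_cast; omega), add_zero]
    exact srwP_two_mul_le j x
  · rw [srwP_eq_zero_of_odd (n := 2 * j) (by push_cast; omega), zero_add, srwP_succ_eq_sum]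
    have := Finset.sum_le_card_nsmul unitVecs (fun d => srwP (2 * j) (x + d)) _
      fun d _ => srwP_two_mul_le j (x + d)
    rw [card_unitVecs, nsmul_eq_mul] at this
    push_cast at this
    linarith

end SimpleRandomWalk

section PotentialKernel

noncomputable def potentialPartialSum (N : ℕ) (x : Z2) : ℝ :=
  ∑ k ∈ Finset.range N, (srwP k 0 - srwP k x)

lemma potentialPartialSum_succ (N : ℕ) (x : Z2) :
    potentialPartialSum (N + 1) x = potentialPartialSum N x + (srwP N 0 - srwP N x) :=
  Finset.sum_range_succ _ _

lemma sum_unitVecs_potentialPartialSum (N : ℕ) (x : Z2) :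
    ∑ d ∈ unitVecs, potentialPartialSum N (x + d)
      = 4 * potentialPartialSum N x + 4 * ((if x = 0 then 1 else 0) - srwP N x) := by
  induction N with
  | zero => simp [potentialPartialSum, srwP]
  | succ N ih =>
    simp only [potentialPartialSum_succ, Finset.sum_add_distrib, Finset.sum_sub_distrib,
      Finset.sum_const, card_unitVecs, ih]
    have := srwP_succ_eq_sum N x
    simp only [nsmul_eq_mul, Nat.cast_ofNat]
    linarith

lemma potentialPartialSum_two_mul_nonneg (N : ℕ) (x : Z2) :
    0 ≤ potentialPartialSum (2 * N) x := by
  induction N with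
  | zero => simp [potentialPartialSum]
  | succ N ih =>
    rw [show 2 * (N + 1) = 2 * N + 1 + 1 by ring, potentialPartialSum_succ,
      potentialPartialSum_succ, srwP_eq_zero_of_odd (n := 2 * N + 1) (x := 0)
        (by push_cast [Prod.fst_zero, Prod.snd_zero]; omega)]
    linarith [srwP_two_mul_add_srwP_two_mul_add_one_le N x]

namespace IsPotentialKernel

variable {a : Z2 → ℝ} (ha : IsPotentialKernel a)
include ha

lemma tendsto_potentialPartialSum (x : Z2) :
    Tendsto (fun N => potentialPartialSum N x) atTop (nhds (a x)) :=
  ha x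

lemma apply_zero : a 0 = 0 :=
  tendsto_nhds_unique (ha 0) (by simp)

lemma nonneg (x : Z2) : 0 ≤ a x :=
  ge_of_tendsto ((ha.tendsto_potentialPartialSum x).comp
      (tendsto_atTop_mono (fun N => show N ≤ 2 * N by omega) tendsto_id :
        Tendsto (2 * ·) atTop atTop))
    (Eventually.of_forall fun N => potentialPartialSum_two_mul_nonneg N x)

lemma tendsto_srwP (x : Z2) : Tendsto (fun N => srwP N x) atTop (nhds 0) := by
  set L := (if x = 0 then 1 else 0) - (∑ d ∈ unitVecs, a (x + d) - 4 * a x) / 4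
  have hL : Tendsto (fun N => srwP N x) atTop (nhds L) := by
    refine (tendsto_const_nhds.sub (((tendsto_finsetSum unitVecs fun d _ =>
      ha.tendsto_potentialPartialSum (x + d)).sub
        ((ha.tendsto_potentialPartialSum x).const_mul 4)).div_const 4)).congr fun N => ?_
    linarith [sum_unitVecs_potentialPartialSum N x]
  -- every other time the walk cannot be at `x`, by parity
  obtain ⟨r, hr⟩ : ∃ r : ℕ, ∀ j : ℕ, srwP (2 * j + r) x = 0 := by
    refine ⟨if (x.1 + x.2) % 2 = 0 then 1 else 0, fun j => srwP_eq_zero_of_odd ?_⟩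
    split_ifs <;> push_cast <;> omega
  have hsub : Tendsto (fun j => 2 * j + r) atTop atTop :=
    tendsto_atTop_mono (fun j => show j ≤ 2 * j + r by omega) tendsto_id
  rwa [tendsto_nhds_unique ((hL.comp hsub).congr hr) tendsto_const_nhds] at hL

lemma sum_unitVecs_add (x : Z2) :
    ∑ d ∈ unitVecs, a (x + d) = 4 * a x + if x = 0 then 4 else 0 := by
  have hlim := tendsto_nhds_unique
    (tendsto_finsetSum unitVecs fun d _ => ha.tendsto_potentialPartialSum (x + d))
    ((((ha.tendsto_potentialPartialSum x).const_mul 4).add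
      ((tendsto_const_nhds.sub (ha.tendsto_srwP x)).const_mul 4)).congr
        fun N => (sum_unitVecs_potentialPartialSum N x).symm)
  rw [hlim]
  split_ifs <;> ring

lemma eq_zero_of_reflTransGen {x z : Z2} (h : Relation.ReflTransGen PuncturedAdj x z)
    (hx : a x = 0) : a z = 0 := by
  induction h with
  | refl => exact hx
  | @tail y z _ hyz ih =>
    have hsum := ha.sum_unitVecs_add y
    rw [if_neg hyz.2.1, ih, mul_zero, add_zero,
      Finset.sum_eq_zero_iff_of_nonneg fun d _ => ha.nonneg _] at hsum
    simpa using hsum _ (nbr_iff_sub_mem_unitVecs.mp hyz.1)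

/-- Minimum principle: a zero of `a` off the origin would spread to all of `ℤ² \ {0}`,
but the four neighbours of the origin carry total mass `4`. -/
lemma pos {x : Z2} (hx : x ≠ 0) : 0 < a x := by
  refine (ha.nonneg x).lt_of_ne' fun hax => ?_
  have hsum := ha.sum_unitVecs_add 0
  rw [Finset.sum_eq_zero fun d hd => ha.eq_zero_of_reflTransGen
    (reflTransGen_puncturedAdj hx (by simpa using ne_zero_of_mem_unitVecs hd)) hax] at hsum
  norm_num [ha.apply_zero] at hsum

lemma sum_Phat_le_one (x : Z2) : ∑ d ∈ unitVecs, Phat a x (x + d) ≤ 1 := by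
  by_cases hx : x = 0
  · simp [Phat, hx]
  calc ∑ d ∈ unitVecs, Phat a x (x + d) ≤ ∑ d ∈ unitVecs, a (x + d) / (4 * a x) := by
        refine Finset.sum_le_sum fun d _ => ?_
        unfold Phat
        split_ifs
        · exact le_rfl
        · exact div_nonneg (ha.nonneg _) (by linarith [ha.nonneg x])
    _ = 1 := by
        rw [← Finset.sum_div, ha.sum_unitVecs_add, if_neg hx, add_zero,
          div_self (by linarith [ha.pos hx])]

end IsPotentialKernel

end PotentialKernel

section ConditionedWalk

variable {a : Z2 → ℝ}

lemma tsum_Phat_mul (x : Z2) (f : Z2 → ℝ) :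
    ∑' z, Phat a x z * f z = ∑ d ∈ unitVecs, Phat a x (x + d) * f (x + d) := by
  rw [tsum_eq_sum (s := unitVecs.map (addLeftEmbedding x)) fun z hz => ?_, Finset.sum_map]
  · rfl
  have hxz : ¬ nbr x z := fun h =>
    hz (Finset.mem_map.2 ⟨z - x, nbr_iff_sub_mem_unitVecs.mp h, by simp⟩)
  rw [Phat, if_neg fun h => hxz h.1, zero_mul]

lemma Phat_apply_zero_right (x : Z2) : Phat a x 0 = 0 :=
  if_neg fun h => h.2.2 rfl

lemma phat_zero (x y : Z2) : phat a 0 x y = if x = y then 1 else 0 := rfl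

lemma phat_succ_eq_sum (n : ℕ) (x y : Z2) :
    phat a (n + 1) x y = ∑ d ∈ unitVecs, Phat a x (x + d) * phat a n (x + d) y :=
  tsum_Phat_mul x _

lemma phat_apply_zero_right {x : Z2} (hx : x ≠ 0) (n : ℕ) : phat a n x 0 = 0 := by
  induction n generalizing x with
  | zero => exact if_neg hx
  | succ n ih =>
    refine (tsum_congr fun z => ?_).trans tsum_zero
    by_cases hz : z = 0
    · rw [hz, Phat_apply_zero_right, zero_mul]
    · rw [ih hz, mul_zero]

lemma sum_range_succ_phat (N : ℕ) (x y : Z2) :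
    ∑ n ∈ Finset.range (N + 1), phat a n x y
      = (if x = y then 1 else 0)
        + ∑ d ∈ unitVecs, Phat a x (x + d) * ∑ n ∈ Finset.range N, phat a n (x + d) y := by
  simp only [Finset.sum_range_succ', phat_succ_eq_sum, Finset.mul_sum]
  rw [Finset.sum_comm, add_comm]
  rfl

variable (hpos : ∀ x, x ≠ 0 → 0 < a x)
include hpos

lemma Phat_nonneg (x z : Z2) : 0 ≤ Phat a x z := by
  unfold Phat
  split_ifs with h
  · exact div_nonneg (hpos z h.2.2).le (by linarith [hpos x h.2.1])
  · exact le_rfl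

lemma Phat_pos {x z : Z2} (h : PuncturedAdj x z) : 0 < Phat a x z := by
  rw [Phat, if_pos (show nbr x z ∧ x ≠ 0 ∧ z ≠ 0 from h)]
  exact div_pos (hpos z h.2.2) (by linarith [hpos x h.2.1])

lemma phat_nonneg (n : ℕ) (x y : Z2) : 0 ≤ phat a n x y := by
  induction n generalizing x with
  | zero => rw [phat_zero]; split_ifs <;> norm_num
  | succ n ih =>
    rw [phat_succ_eq_sum]
    exact Finset.sum_nonneg fun d _ => mul_nonneg (Phat_nonneg hpos _ _) (ih _)

lemma phat_mul_phat_le (m n : ℕ) (x y z : Z2) :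
    phat a m x y * phat a n y z ≤ phat a (m + n) x z := by
  induction m generalizing x with
  | zero =>
    rw [phat_zero]
    split_ifs with h
    · rw [h, one_mul, zero_add]
    · rw [zero_mul]; exact phat_nonneg hpos _ _ _
  | succ m ih =>
    rw [show m + 1 + n = m + n + 1 by omega, phat_succ_eq_sum, phat_succ_eq_sum, Finset.sum_mul]
    exact Finset.sum_le_sum fun d _ => by
      rw [mul_assoc]; exact mul_le_mul_of_nonneg_left (ih _) (Phat_nonneg hpos _ _)

lemma exists_phat_pos_of_reflTransGen {y z : Z2} (h : Relation.ReflTransGen PuncturedAdj y z) :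
    ∃ k, 0 < phat a k y z := by
  induction h using Relation.ReflTransGen.head_induction_on with
  | refl => exact ⟨0, by simp [phat]⟩
  | @head y w hyw _ ih =>
    obtain ⟨k, hk⟩ := ih
    refine ⟨k + 1, ?_⟩
    rw [phat_succ_eq_sum]
    have hd : w - y ∈ unitVecs := nbr_iff_sub_mem_unitVecs.mp hyw.1
    refine lt_of_lt_of_le ?_ (Finset.single_le_sum (fun d _ => mul_nonneg
      (Phat_nonneg hpos _ _) (phat_nonneg hpos k _ _)) hd)
    rw [add_sub_cancel]
    exact mul_pos (Phat_pos hpos hyw) hk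

lemma Phat_mul_div_le {x : Z2} (hx : x ≠ 0) {c : ℝ} (hc : 0 ≤ c) (z : Z2) :
    Phat a x z * (4 * c / a z) ≤ c / a x := by
  have hax := hpos x hx
  unfold Phat
  split_ifs with h
  · exact le_of_eq (by field_simp [(hpos z h.2.2).ne'])
  · rw [zero_mul]; positivity

/-- `4 a(u) / a` dominates the Green function of a neighbour `u` of the origin: by
`Phat_mul_div_le` it is a supersolution, and at `u` itself one of the four steps, the one into
the origin, is lost, which pays for the visit at time `0`. -/
lemma sum_phat_le_of_mem_unitVecs {u : Z2} (hu : u ∈ unitVecs) (N : ℕ) {x : Z2} (hx : x ≠ 0) :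
    ∑ n ∈ Finset.range N, phat a n x u ≤ 4 * a u / a x := by
  have hau := hpos u (ne_zero_of_mem_unitVecs hu)
  induction N generalizing x with
  | zero => simpa using div_nonneg (by positivity) (hpos x hx).le
  | succ N ih =>
    have hax := hpos x hx
    set f := fun d => Phat a x (x + d) * ∑ n ∈ Finset.range N, phat a n (x + d) u
    have hstep : ∀ d ∈ unitVecs, f d ≤ a u / a x := fun d _ => by
      by_cases hxd : x + d = 0
      · simp only [f, hxd, Phat_apply_zero_right, zero_mul]
        positivity
      exact (mul_le_mul_of_nonneg_left (ih hxd) (Phat_nonneg hpos _ _)).trans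
        (Phat_mul_div_le hpos hx hau.le _)
    rw [sum_range_succ_phat]
    by_cases hxu : x = u
    · subst hxu
      have hzero : f (-x) = 0 := by simp [f, Phat_apply_zero_right]
      have h3 := Finset.sum_le_card_nsmul (unitVecs.erase (-x)) f _
        fun d hd => hstep d (Finset.mem_of_mem_erase hd)
      rw [Finset.sum_erase _ hzero, Finset.card_erase_of_mem (neg_mem_unitVecs hu),
        card_unitVecs, nsmul_eq_mul, div_self hax.ne'] at h3
      rw [if_pos rfl, mul_div_assoc, div_self hax.ne']
      norm_num at h3 ⊢
      linarith
    · have h4 := Finset.sum_le_card_nsmul _ f _ hstep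
      rw [card_unitVecs, nsmul_eq_mul] at h4
      rw [if_neg hxu, mul_div_assoc]
      norm_num at h4 ⊢
      linarith

lemma exists_sum_phat_le {x : Z2} (hx : x ≠ 0) (y : Z2) :
    ∃ C, ∀ N, ∑ n ∈ Finset.range N, phat a n x y ≤ C := by
  by_cases hy : y = 0
  · exact ⟨0, fun N => by simp [hy, phat_apply_zero_right hx]⟩
  obtain ⟨k, hk⟩ := exists_phat_pos_of_reflTransGen hpos (reflTransGen_puncturedAdj_one_zero hy)
  refine ⟨4 * a (1, 0) / a x / phat a k y (1, 0), fun N => (le_div_iff₀ hk).2 ?_⟩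
  calc (∑ n ∈ Finset.range N, phat a n x y) * phat a k y (1, 0)
      ≤ ∑ n ∈ Finset.range N, phat a (k + n) x (1, 0) := by
        rw [Finset.sum_mul]
        exact Finset.sum_le_sum fun n _ => add_comm n k ▸ phat_mul_phat_le hpos n k x y _
    _ ≤ ∑ n ∈ Finset.range (k + N), phat a n x (1, 0) := by
        rw [Finset.sum_range_add]
        exact le_add_of_nonneg_left (Finset.sum_nonneg fun n _ => phat_nonneg hpos _ _ _)
    _ ≤ 4 * a (1, 0) / a x := sum_phat_le_of_mem_unitVecs hpos (by decide) _ hx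

end ConditionedWalk

section Visits

variable {a : Z2 → ℝ} {y : Z2}

lemma visitsGE_zero (t : ℕ) (x : Z2) : visitsGE a y 0 t x = 1 := by
  cases t <;> rfl

lemma visitsGE_succ_succ (n t : ℕ) (x : Z2) :
    visitsGE a y (n + 1) (t + 1) x = if x = y
      then ∑ d ∈ unitVecs, Phat a x (x + d) * visitsGE a y n t (x + d)
      else ∑ d ∈ unitVecs, Phat a x (x + d) * visitsGE a y (n + 1) t (x + d) := by
  rw [visitsGE, tsum_Phat_mul, tsum_Phat_mul]

variable (hpos : ∀ x, x ≠ 0 → 0 < a x)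
include hpos

lemma visitsGE_nonneg (n t : ℕ) (x : Z2) : 0 ≤ visitsGE a y n t x := by
  induction t generalizing n x with
  | zero =>
    cases n with
    | zero => rw [visitsGE_zero]; exact zero_le_one
    | succ n => rw [visitsGE]; split_ifs <;> norm_num
  | succ t ih =>
    cases n with
    | zero => rw [visitsGE_zero]; exact zero_le_one
    | succ n =>
      rw [visitsGE_succ_succ]
      split_ifs <;>
        exact Finset.sum_nonneg fun d _ => mul_nonneg (Phat_nonneg hpos _ _) (ih _ _)

lemma sum_range_visitsGE_le (M t : ℕ) (x : Z2) :
    ∑ m ∈ Finset.range M, visitsGE a y m t x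
      ≤ 1 + ∑ m ∈ Finset.range M, visitsGE a y (m + 1) t x := by
  calc ∑ m ∈ Finset.range M, visitsGE a y m t x
      ≤ ∑ m ∈ Finset.range (M + 1), visitsGE a y m t x :=
        Finset.sum_le_sum_of_subset_of_nonneg (Finset.range_subset_range.2 M.le_succ)
          fun m _ _ => visitsGE_nonneg hpos _ _ _
    _ = _ := by rw [Finset.sum_range_succ', visitsGE_zero, add_comm]

variable (hrow : ∀ x, ∑ d ∈ unitVecs, Phat a x (x + d) ≤ 1)
include hrow

lemma visitsGE_succ_le (n t : ℕ) (x : Z2) : visitsGE a y (n + 1) t x ≤ visitsGE a y n t x := by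
  induction t generalizing n x with
  | zero =>
    cases n with
    | zero => rw [visitsGE_zero, visitsGE]; split_ifs <;> norm_num
    | succ n =>
      rw [visitsGE, if_neg fun h => n.succ_ne_zero h.2]
      exact visitsGE_nonneg hpos _ _ _
  | succ t ih =>
    have hmono : ∀ m, ∑ d ∈ unitVecs, Phat a x (x + d) * visitsGE a y (m + 1) t (x + d)
        ≤ ∑ d ∈ unitVecs, Phat a x (x + d) * visitsGE a y m t (x + d) := fun m =>
      Finset.sum_le_sum fun d _ => mul_le_mul_of_nonneg_left (ih _ _) (Phat_nonneg hpos _ _)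
    cases n with
    | zero =>
      have hsum : ∑ d ∈ unitVecs, Phat a x (x + d) * visitsGE a y 0 t (x + d) ≤ 1 := by
        simpa only [visitsGE_zero, mul_one] using hrow x
      rw [visitsGE_zero, visitsGE_succ_succ]
      split_ifs
      · exact hsum
      · exact (hmono 0).trans hsum
    | succ n =>
      rw [visitsGE_succ_succ, visitsGE_succ_succ]
      split_ifs
      · exact hmono n
      · exact hmono (n + 1)

lemma visitsGE_antitone (t : ℕ) (x : Z2) : Antitone fun n => visitsGE a y n t x :=
  antitone_nat_of_succ_le fun n => visitsGE_succ_le hpos hrow n t x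

/-- Tail-sum formula: `∑ₘ P[#visits ≥ m + 1]` is the expected number of visits. -/
lemma sum_visitsGE_le (M t : ℕ) (x : Z2) :
    ∑ m ∈ Finset.range M, visitsGE a y (m + 1) t x
      ≤ ∑ n ∈ Finset.range (t + 1), phat a n x y := by
  induction t generalizing M x with
  | zero =>
    rcases M with _ | M
    · simpa using phat_nonneg hpos 0 x y
    · rw [Finset.sum_range_succ']
      simp [visitsGE, phat_zero]
  | succ t ih =>
    rw [sum_range_succ_phat]
    split_ifs with hxy
    · calc ∑ m ∈ Finset.range M, visitsGE a y (m + 1) (t + 1) x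
          = ∑ d ∈ unitVecs, Phat a x (x + d) *
              ∑ m ∈ Finset.range M, visitsGE a y m t (x + d) := by
            simp only [visitsGE_succ_succ, if_pos hxy, Finset.mul_sum]
            exact Finset.sum_comm
        _ ≤ ∑ d ∈ unitVecs, Phat a x (x + d) *
              (1 + ∑ n ∈ Finset.range (t + 1), phat a n (x + d) y) :=
            Finset.sum_le_sum fun d _ => mul_le_mul_of_nonneg_left
              ((sum_range_visitsGE_le hpos M t _).trans (by linarith [ih M (x + d)]))
              (Phat_nonneg hpos _ _)
        _ ≤ _ := by
            simp only [mul_add, mul_one, Finset.sum_add_distrib]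
            linarith [hrow x]
    · calc ∑ m ∈ Finset.range M, visitsGE a y (m + 1) (t + 1) x
          = ∑ d ∈ unitVecs, Phat a x (x + d) *
              ∑ m ∈ Finset.range M, visitsGE a y (m + 1) t (x + d) := by
            simp only [visitsGE_succ_succ, if_neg hxy, Finset.mul_sum]
            exact Finset.sum_comm
        _ ≤ _ := by
            rw [zero_add]
            exact Finset.sum_le_sum fun d _ =>
              mul_le_mul_of_nonneg_left (ih M _) (Phat_nonneg hpos _ _)

/-- Markov's inequality for the number of visits. -/
lemma visitsGE_le_div {x : Z2} {C : ℝ} (hC : ∀ N, ∑ n ∈ Finset.range N, phat a n x y ≤ C)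
    (m t : ℕ) : visitsGE a y (m + 1) t x ≤ C / (m + 1) := by
  rw [le_div_iff₀ (by positivity)]
  calc visitsGE a y (m + 1) t x * (m + 1)
      = ∑ j ∈ Finset.range (m + 1), visitsGE a y (m + 1) t x := by simp [mul_comm]
    _ ≤ ∑ j ∈ Finset.range (m + 1), visitsGE a y (j + 1) t x :=
        Finset.sum_le_sum fun j hj =>
          visitsGE_antitone hpos hrow t x (by simpa [Nat.lt_succ_iff] using hj)
    _ ≤ C := (sum_visitsGE_le hpos hrow _ t x).trans (hC _)

lemma tendsto_iSup_visitsGE {x : Z2} {C : ℝ}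
    (hC : ∀ N, ∑ n ∈ Finset.range N, phat a n x y ≤ C) :
    Tendsto (fun n => ⨆ t, visitsGE a y n t x) atTop (nhds 0) := by
  have hC0 : 0 ≤ C := by simpa using hC 0
  rw [← Filter.tendsto_add_atTop_iff_nat 1]
  refine squeeze_zero (fun n => Real.iSup_nonneg fun t => visitsGE_nonneg hpos _ _ _)
    (fun n => Real.iSup_le (fun t => visitsGE_le_div hpos hrow hC n t) (by positivity)) ?_
  simpa [div_eq_mul_inv] using tendsto_one_div_add_atTop_nhds_zero_nat.const_mul C

end Visits

/-- the conditioned walk is transient: started from any `x ≠ 0`, it visits any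
fixed site `y` only finitely many times a.s., i.e. `P_x[# visits to y ≥ n] → 0` as `n → ∞`. -/
theorem hatS_transient (a : Z2 → ℝ) (ha : IsPotentialKernel a) :
    ∀ x : Z2, x ≠ 0 → ∀ y : Z2,
      Tendsto (fun n : ℕ => ⨆ t : ℕ, visitsGE a y n t x) atTop (nhds 0) := by
  intro x hx y
  obtain ⟨C, hC⟩ := exists_sum_phat_le (fun _ => ha.pos) hx y
  exact tendsto_iSup_visitsGE (fun _ => ha.pos) ha.sum_Phat_le_one hC
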